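/- arXiv:2207.00354 — 4 statements merged into one kernel-verified Lean document; each statement's English description precedes it below -/
import Mathlib

section
/- If S, S' ⊆ ℕ and the symmetric difference S Δ S' = (S \ S') ∪ (S' \ S) is infinite, then the sets {2^(2^n) : n ∈ S} and {2^(2^m) : m ∈ S'} are not related (i.e. {2^(2^n)}_{n∈S} ≁ {2^(2^m)}_{m∈S'}). -/
/-- Subsets `L, L'` of the positive integers are *related via `k`* (for `k ≥ 1`) if:
(1) for every `m ∈ L` with `m > (k+1)²` there is `m' ∈ L'` with `m ≤ k·m'` and `m' ≤ k·m`, and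
(2) symmetrically. -/
def RelatedVia (k : ℕ) (L L' : Set ℕ) : Prop :=
  (∀ m ∈ L, (k + 1) ^ 2 < m → ∃ m' ∈ L', m ≤ k * m' ∧ m' ≤ k * m) ∧
  (∀ m' ∈ L', (k + 1) ^ 2 < m' → ∃ m ∈ L, m' ≤ k * m ∧ m ≤ k * m')

/-- `L ∼ L'` iff `L` and `L'` are related via some `k ≥ 1`. -/
def Related (L L' : Set ℕ) : Prop := ∃ k : ℕ, 1 ≤ k ∧ RelatedVia k L L'

/-!
Distinct doubly exponential numbers are far apart: if `m < n` then `(2 ^ 2 ^ m) ^ 2 ≤ 2 ^ 2 ^ n`,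
so `2 ^ 2 ^ m` and `2 ^ 2 ^ n` with `m ≠ n` are never within a factor `k` of each other
when `k < n`. Hence, if the two sets were related via `k`, every `n > k` in `S` would also lie
in `S'` and vice versa, leaving the symmetric difference finite.
-/

theorem RelatedVia.symm {k : ℕ} {L L' : Set ℕ} (h : RelatedVia k L L') : RelatedVia k L' L :=
  ⟨h.2, h.1⟩

theorem Nat.mul_lt_of_sq_lt_of_sq_le {a b c : ℕ} (ha : a ^ 2 < c) (hb : b ^ 2 ≤ c) :
    a * b < c := by
  have : (a * b) ^ 2 < c ^ 2 := by
    rcases b.eq_zero_or_pos with rfl | hb0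
    · simpa using pow_pos ((Nat.zero_le _).trans_lt ha) 2
    · calc (a * b) ^ 2 = a ^ 2 * b ^ 2 := mul_pow a b 2
        _ < c * b ^ 2 := Nat.mul_lt_mul_of_pos_right ha (by positivity)
        _ ≤ c * c := Nat.mul_le_mul_left c hb
        _ = c ^ 2 := (sq c).symm
  exact lt_of_pow_lt_pow_left₀ 2 (Nat.zero_le c) this

theorem Nat.sq_two_pow_two_pow_le {a b : ℕ} (h : a < b) : (2 ^ 2 ^ a) ^ 2 ≤ 2 ^ 2 ^ b := by
  rw [← pow_mul, ← pow_succ]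
  exact Nat.pow_le_pow_right two_pos (Nat.pow_le_pow_right two_pos h)

theorem Nat.succ_sq_lt_two_pow_two_pow {k n : ℕ} (h : k < n) : (k + 1) ^ 2 < 2 ^ 2 ^ n :=
  calc (k + 1) ^ 2 < (2 ^ 2 ^ k) ^ 2 := by
        have hk : k + 1 < 2 ^ 2 ^ k :=
          (Nat.succ_le_of_lt k.lt_two_pow_self).trans_lt
            (Nat.pow_lt_pow_right one_lt_two k.lt_two_pow_self)
        exact Nat.pow_lt_pow_left hk two_ne_zero
    _ ≤ 2 ^ 2 ^ n := Nat.sq_two_pow_two_pow_le h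

theorem Nat.eq_of_two_pow_two_pow_le_mul {k m n : ℕ} (hk : k < n)
    (hnm : 2 ^ 2 ^ n ≤ k * 2 ^ 2 ^ m) (hmn : 2 ^ 2 ^ m ≤ k * 2 ^ 2 ^ n) : m = n := by
  have hk2 : k ^ 2 < 2 ^ 2 ^ n :=
    (Nat.pow_le_pow_left k.le_succ 2).trans_lt (Nat.succ_sq_lt_two_pow_two_pow hk)
  rcases lt_trichotomy m n with hlt | heq | hgt
  · exact absurd hnm (Nat.mul_lt_of_sq_lt_of_sq_le hk2 (Nat.sq_two_pow_two_pow_le hlt)).not_ge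
  · exact heq
  · have hnm2 := Nat.sq_two_pow_two_pow_le hgt
    have hk2' : k ^ 2 < 2 ^ 2 ^ m :=
      hk2.trans_le ((Nat.le_self_pow two_ne_zero _).trans hnm2)
    exact absurd hmn (Nat.mul_lt_of_sq_lt_of_sq_le hk2' hnm2).not_ge

theorem RelatedVia.mem_of_mem_of_lt {k n : ℕ} {S S' : Set ℕ}
    (h : RelatedVia k {m | ∃ n ∈ S, m = 2 ^ 2 ^ n} {m | ∃ n ∈ S', m = 2 ^ 2 ^ n})
    (hn : n ∈ S) (hkn : k < n) : n ∈ S' := by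
  obtain ⟨_, ⟨m, hm, rfl⟩, hnm, hmn⟩ :=
    h.1 _ ⟨n, hn, rfl⟩ (Nat.succ_sq_lt_two_pow_two_pow hkn)
  rwa [← Nat.eq_of_two_pow_two_pow_le_mul hkn hnm hmn]

/-- If the symmetric difference of `S, S' ⊆ ℕ` is infinite, then
`{2^(2^n) : n ∈ S}` and `{2^(2^m) : m ∈ S'}` are not related. -/
theorem not_related_of_infinite_symmDiff (S S' : Set ℕ)
    (h : (symmDiff S S').Infinite) :
    ¬ Related {m | ∃ n ∈ S, m = 2 ^ 2 ^ n} {m | ∃ n ∈ S', m = 2 ^ 2 ^ n} := by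
  rintro ⟨k, -, hk⟩
  obtain ⟨n, hn, hkn⟩ := h.exists_gt k
  rcases hn with ⟨hS, hS'⟩ | ⟨hS', hS⟩
  · exact hS' (hk.mem_of_mem_of_lt hS hkn)
  · exact hS (hk.symm.mem_of_mem_of_lt hS' hkn)
end

section
/- If S, S' ⊆ ℕ and the symmetric difference S Δ S' is infinite, then the sets {10100 + 200·2^(2^n) : n ∈ S} and {10100 + 200·2^(2^m) : m ∈ S'} are not related. (These are the sets {|w_n|}_{n∈S} and {|w_m|}_{m∈S'} of lengths of the relators w_n.) -/
/-!
The lengths `ℓ n = 10100 + 200·2^(2^n)` grow so fast that, for each fixed `k`, eventually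
`k · ℓ n < ℓ (n+1)`. Hence for large `n` the only length within a factor `k` of `ℓ n` is `ℓ n`
itself. Infinitely many `n` lie in `S \ S'` (or in `S' \ S`), and for such a large `n` the length
`ℓ n` has no partner within a factor `k` on the other side, whatever `k` is.
-/

open Filter

theorem relatedVia_comm {k : ℕ} {L L' : Set ℕ} : RelatedVia k L L' ↔ RelatedVia k L' L :=
  And.comm

theorem eq_of_le_mul_of_le_mul {f : ℕ → ℕ} (hf : Monotone f) {k N : ℕ}
    (hgap : ∀ n ≥ N, k * f n < f (n + 1)) {n n' : ℕ} (hn : N < n)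
    (h₁ : f n ≤ k * f n') (h₂ : f n' ≤ k * f n) : n' = n := by
  rcases lt_trichotomy n' n with hlt | heq | hgt
  · have hprev : k * f (n - 1) < f n := by
      simpa [Nat.sub_add_cancel (Nat.one_le_of_lt hn)] using hgap (n - 1) (by omega)
    have : k * f n' ≤ k * f (n - 1) := Nat.mul_le_mul_left k (hf (by omega))
    omega
  · exact heq
  · have : f (n + 1) ≤ f n' := hf hgt
    have := hgap n hn.le
    omega

section Lacunary

variable {f : ℕ → ℕ} (hf : StrictMono f) (hgap : ∀ k, ∀ᶠ n in atTop, k * f n < f (n + 1))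
include hf hgap

theorem not_relatedVia_image_of_infinite_diff {S S' : Set ℕ} (h : (S \ S').Infinite) (k : ℕ) :
    ¬ RelatedVia k (f '' S) (f '' S') := by
  rintro ⟨hrel, -⟩
  obtain ⟨N, hN⟩ := eventually_atTop.mp (hgap k)
  obtain ⟨n, ⟨hnS, hnS'⟩, hn⟩ := h.exists_gt (max N ((k + 1) ^ 2))
  have hlarge : (k + 1) ^ 2 < f n := (le_max_right _ _).trans_lt (hn.trans_le (hf.id_le n))
  obtain ⟨_, ⟨n', hn'S', rfl⟩, h₁, h₂⟩ := hrel (f n) ⟨n, hnS, rfl⟩ hlarge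
  exact hnS' (eq_of_le_mul_of_le_mul hf.monotone hN ((le_max_left _ _).trans_lt hn) h₁ h₂ ▸ hn'S')

theorem not_related_image_of_infinite_symmDiff {S S' : Set ℕ} (h : (symmDiff S S').Infinite) :
    ¬ Related (f '' S) (f '' S') := by
  rintro ⟨k, -, hk⟩
  rcases Set.infinite_union.mp (Set.symmDiff_def S S' ▸ h) with hdiff | hdiff
  · exact not_relatedVia_image_of_infinite_diff hf hgap hdiff k hk
  · exact not_relatedVia_image_of_infinite_diff hf hgap hdiff k (relatedVia_comm.mp hk)

end Lacunary

def relatorLength (n : ℕ) : ℕ := 10100 + 200 * 2 ^ 2 ^ n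

theorem relatorLength_strictMono : StrictMono relatorLength := fun a b hab => by
  have : 2 ^ 2 ^ a < 2 ^ 2 ^ b :=
    Nat.pow_lt_pow_right one_lt_two (Nat.pow_lt_pow_right one_lt_two hab)
  unfold relatorLength
  omega

theorem mul_relatorLength_lt_succ {k n : ℕ} (hn : 2 * k + 51 ≤ 2 ^ 2 ^ n) :
    k * relatorLength n < relatorLength (n + 1) := by
  have hsq : 2 ^ 2 ^ (n + 1) = 2 ^ 2 ^ n * 2 ^ 2 ^ n := by rw [pow_succ, pow_mul, sq]
  unfold relatorLength
  rw [hsq]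
  nlinarith

theorem eventually_mul_relatorLength_lt_succ (k : ℕ) :
    ∀ᶠ n in atTop, k * relatorLength n < relatorLength (n + 1) := by
  filter_upwards [eventually_ge_atTop (2 * k + 51)] with n hn
  apply mul_relatorLength_lt_succ
  calc 2 * k + 51 ≤ n := hn
    _ ≤ 2 ^ n := n.lt_two_pow_self.le
    _ ≤ 2 ^ 2 ^ n := Nat.pow_le_pow_right two_pos n.lt_two_pow_self.le

/-- If the symmetric difference of `S, S' ⊆ ℕ` is infinite, then the sets of relator
lengths `{|w_n|}_{n∈S} = {10100 + 200·2^(2^n) : n ∈ S}` and `{|w_m|}_{m∈S'}` are not related. -/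
theorem not_related_lengths_of_infinite_symmDiff (S S' : Set ℕ)
    (h : (symmDiff S S').Infinite) :
    ¬ Related {m | ∃ n ∈ S, m = 10100 + 200 * 2 ^ 2 ^ n}
        {m | ∃ n ∈ S', m = 10100 + 200 * 2 ^ 2 ^ n} := by
  have himage (T : Set ℕ) : {m | ∃ n ∈ T, m = 10100 + 200 * 2 ^ 2 ^ n} = relatorLength '' T := by
    ext m
    simp [relatorLength, eq_comm]
  rw [himage, himage]
  exact not_related_image_of_infinite_symmDiff relatorLength_strictMono
    eventually_mul_relatorLength_lt_succ h
end

section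
/- For any infinite subset S of {n ∈ ℕ : n > 100} and any k ∈ ℕ, the presentation ⟨a, b ∣ b^(2^(2^k)), w_n : n ∈ S, n < k⟩ satisfies the C'(1/6) small-cancellation condition. -/
/-- The free group on two generators. -/
abbrev F2 := FreeGroup (Fin 2)

/-- The first generator `a` of `F₂`. -/
def a : F2 := FreeGroup.of 0

/-- The second generator `b` of `F₂`. -/
def b : F2 := FreeGroup.of 1

open scoped commutatorElement in
/-- The relator `w_n = [a, b^(2^(2^n))]·[a², b^(2^(2^n))]···[a^100, b^(2^(2^n))]`. -/
def w (n : ℕ) : F2 :=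
  ((List.range 100).map fun i => ⁅a ^ (i + 1), b ^ 2 ^ 2 ^ n⁆).prod

/-- The symmetrized closure `R*` of a set `R` of (cyclically reduced) relators:
all elements whose reduced word is a cyclic permutation of the reduced word of
some `r ∈ R` or of its inverse. -/
def symClosure (R : Set F2) : Set F2 :=
  {g | ∃ r ∈ R, ∃ i : ℕ,
    g.toWord = r.toWord.rotate i ∨ g.toWord = (r⁻¹).toWord.rotate i}

/-- A *piece* is a nonempty word occurring as a common prefix of two distinct
elements of the symmetrized closure `R*`. -/
def IsPiece (R : Set F2) (p : List (Fin 2 × Bool)) : Prop :=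
  p ≠ [] ∧ ∃ r₁ ∈ symClosure R, ∃ r₂ ∈ symClosure R,
    r₁ ≠ r₂ ∧ p <+: r₁.toWord ∧ p <+: r₂.toWord

/-- The presentation with relators `R` satisfies `C'(1/6)`: every piece `p` that is
a prefix of some `r ∈ R*` satisfies `|p| < |r|/6`. -/
def CPrimeSixth (R : Set F2) : Prop :=
  ∀ p, IsPiece R p → ∀ r ∈ symClosure R, p <+: r.toWord →
    6 * p.length < r.toWord.length

/-!
Every element of `R*` is either `b^(±2^(2^k))`, a power of a single letter, or a cyclic
permutation of `w_n^(±1)` for some `n ∈ S` below `k`. The reduced word of `w_n^(±1)` is a cyclic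
sequence of 400 maximal runs `g^(±e)` of a single letter, alternating between `a`-runs of length
at most 100 and `b`-runs of length `M = 2^(2^n) > 100`, of total length `10100 + 200 M`.

Let `p` be a common prefix of two distinct elements of `R*`, and a prefix of `r ∈ R*`.
* If `r` is a power of `b`, then `p` is a power of one letter. Two powers of `b` with the same
  first letter coincide, so one of the two relators `p` starts is a rotation of some
  `w_n^(±1)`, and `p` lies in its first run:
  `|p| ≤ 2^(2^n) < 2^(2^k) / 6` since `n < k`.
* If `r` is a rotation of `w_n^(±1)` and `p` meets at most three of its runs, then
  `|p| ≤ 3 M < |r| / 6`.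
* Otherwise `p` contains the (partial) first run and the next two runs of `r`, plus one letter
  of the fourth. The letters of two consecutive runs determine the orientation and the position
  modulo 4, and the lengths of two consecutive runs then determine `M` and the position
  modulo 400. So every element of `R*` starting with `p` equals `r`, contradicting that `p` is
  a piece.
-/

open List Function FreeGroup
open scoped commutatorElement

section Runs

variable {α : Type*}

theorem replicate_append_prefix_replicate_append {x x' y : α} {u u' : List α} {c c' : ℕ}
    (hc : 0 < c) (hc' : 0 < c') (hu : u.head? = some y) (hxy : x ≠ y) (hu' : x' ∉ u'.head?)
    (h : replicate c x ++ u <+: replicate c' x' ++ u') : c = c' ∧ x = x' ∧ u <+: u' := by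
  obtain ⟨v, rfl⟩ := head?_eq_some_iff.mp hu
  induction c generalizing c' with
  | zero => omega
  | succ c ih =>
    obtain ⟨c', rfl⟩ := Nat.exists_eq_add_one_of_ne_zero hc'.ne'
    rw [replicate_succ, replicate_succ, cons_append, cons_append, cons_prefix_cons] at h
    obtain ⟨rfl, h⟩ := h
    rcases Nat.eq_zero_or_pos c with rfl | hc
    · rcases Nat.eq_zero_or_pos c' with rfl | hc'
      · simpa using h
      · obtain ⟨c', rfl⟩ := Nat.exists_eq_add_one_of_ne_zero hc'.ne'
        simp [replicate_succ] at h
        exact absurd h.1 hxy.symm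
    · rcases Nat.eq_zero_or_pos c' with rfl | hc'
      · obtain ⟨c, rfl⟩ := Nat.exists_eq_add_one_of_ne_zero hc.ne'
        cases u' <;> simp_all [replicate_succ]
      · obtain ⟨rfl, -, h⟩ := ih hc hc' h
        exact ⟨rfl, rfl, h⟩

variable (x : ℕ → α) (ℓ : ℕ → ℕ)

def runs (r : ℕ) : ℕ → List α
  | 0 => []
  | n + 1 => replicate (ℓ r) (x r) ++ runs (r + 1) n

theorem runs_add (r m n : ℕ) : runs x ℓ r (m + n) = runs x ℓ r m ++ runs x ℓ (r + m) n := by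
  induction m generalizing r with
  | zero => simp [runs]
  | succ m ih =>
    rw [Nat.add_right_comm, runs, ih, runs, append_assoc, Nat.add_right_comm, Nat.add_assoc]

theorem mem_head?_runs {r : ℕ} (hr : 0 < ℓ r) (n : ℕ) : ∀ y ∈ (runs x ℓ r n).head?, y = x r := by
  cases n <;> simp [runs, head?_append, head?_replicate, hr.ne']

theorem isChain_runs {R : α → α → Prop} (hR : ∀ y, R y y) (hx : ∀ t, R (x t) (x (t + 1)))
    (hℓ : ∀ t, 0 < ℓ t) (r n : ℕ) : IsChain R (runs x ℓ r n) := by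
  induction n generalizing r with
  | zero => exact isChain_nil
  | succ n ih =>
    refine (isChain_replicate_of_rel _ (hR _)).append (ih _) fun y hy z hz => ?_
    rw [eq_of_mem_replicate (mem_of_mem_getLast? hy), mem_head?_runs x ℓ (hℓ _) n z hz]
    exact hx r

theorem runs_congr {P r r' : ℕ} (hx : Periodic x P) (hℓ : Periodic ℓ P) (h : r % P = r' % P)
    (n : ℕ) : runs x ℓ r n = runs x ℓ r' n := by
  induction n generalizing r r' with
  | zero => rfl
  | succ n ih =>
    rw [runs, runs, ← hx.map_mod_nat r, ← hℓ.map_mod_nat r, h, hx.map_mod_nat, hℓ.map_mod_nat]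
    exact congrArg _ (ih (by rw [Nat.add_mod, h, ← Nat.add_mod]))

/-- The rotation of the cyclic word `runs x ℓ 0 (n + 1)` which starts with the last `c` letters
of run `ρ`. -/
def rotForm (n ρ c : ℕ) : List α :=
  replicate c (x ρ) ++ runs x ℓ (ρ + 1) n ++ replicate (ℓ ρ - c) (x ρ)

variable {x ℓ}

theorem rotForm_congr {n ρ ρ' : ℕ} (hx : Periodic x (n + 1)) (hℓ : Periodic ℓ (n + 1))
    (h : ρ % (n + 1) = ρ' % (n + 1)) (c : ℕ) : rotForm x ℓ n ρ c = rotForm x ℓ n ρ' c := by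
  have hsucc : (ρ + 1) % (n + 1) = (ρ' + 1) % (n + 1) := by rw [Nat.add_mod, h, ← Nat.add_mod]
  rw [rotForm, rotForm, ← hx.map_mod_nat ρ, ← hℓ.map_mod_nat ρ, h, hx.map_mod_nat,
    hℓ.map_mod_nat, runs_congr x ℓ hx hℓ hsucc]

theorem rotate_one_rotForm_of_lt {n ρ c : ℕ} (hc : c + 1 < ℓ ρ + 1) :
    (rotForm x ℓ n ρ (c + 1)).rotate 1 = rotForm x ℓ n ρ c := by
  rw [rotForm, replicate_succ, cons_append, cons_append, rotate_cons_succ, rotate_zero, rotForm,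
    append_assoc, append_assoc, append_assoc, ← replicate_succ',
    show ℓ ρ - (c + 1) + 1 = ℓ ρ - c by omega]

theorem rotate_one_rotForm_one {n ρ : ℕ} (hx : Periodic x (n + 1)) (hℓ : Periodic ℓ (n + 1))
    (hρ : 0 < ℓ ρ) : (rotForm x ℓ n ρ 1).rotate 1 = rotForm x ℓ n (ρ + 1) (ℓ (ρ + 1)) := by
  have hwrap : replicate (ℓ ρ) (x ρ) = runs x ℓ (ρ + 1 + n) 1 := by
    simp [runs, show ρ + 1 + n = ρ + (n + 1) by omega, hx ρ, hℓ ρ]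
  rw [rotForm, replicate_one, cons_append, cons_append, rotate_cons_succ, rotate_zero, nil_append,
    append_assoc, ← replicate_succ', Nat.sub_add_cancel hρ, hwrap, ← runs_add, rotForm,
    Nat.sub_self, replicate_zero, append_nil, runs]

theorem exists_rotate_runs_eq_rotForm {n : ℕ} (hx : Periodic x (n + 1))
    (hℓ : Periodic ℓ (n + 1)) (hpos : ∀ t, 0 < ℓ t) (j : ℕ) :
    ∃ ρ c, 0 < c ∧ c ≤ ℓ ρ ∧ (runs x ℓ 0 (n + 1)).rotate j = rotForm x ℓ n ρ c := by
  induction j with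
  | zero => exact ⟨0, ℓ 0, hpos 0, le_rfl, by simp [rotForm, runs]⟩
  | succ j ih =>
    obtain ⟨ρ, c, hc, hcρ, h⟩ := ih
    rw [← rotate_rotate, h]
    obtain ⟨c, rfl⟩ := Nat.exists_eq_add_one_of_ne_zero hc.ne'
    rcases Nat.eq_zero_or_pos c with rfl | hc
    · exact ⟨ρ + 1, _, hpos _, le_rfl, rotate_one_rotForm_one hx hℓ (hpos ρ)⟩
    · exact ⟨ρ, c, hc, by omega, rotate_one_rotForm_of_lt (by omega)⟩

variable (x ℓ) in
def rotHead (ρ c : ℕ) : List α :=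
  replicate c (x ρ) ++ replicate (ℓ (ρ + 1)) (x (ρ + 1)) ++ replicate (ℓ (ρ + 2)) (x (ρ + 2)) ++
    [x (ρ + 3)]

theorem rotForm_eq_rotHead_append {n ρ c : ℕ} (hℓ : 0 < ℓ (ρ + 3)) :
    rotForm x ℓ (n + 3) ρ c = rotHead x ℓ ρ c ++ (replicate (ℓ (ρ + 3) - 1) (x (ρ + 3)) ++
      runs x ℓ (ρ + 4) n ++ replicate (ℓ ρ - c) (x ρ)) := by
  obtain ⟨m, hm⟩ := Nat.exists_eq_add_one_of_ne_zero hℓ.ne'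
  simp [rotForm, rotHead, runs, hm, replicate_succ, add_assoc]

theorem rotHead_prefix_of_prefix {n ρ c : ℕ} {p : List α} (hℓ : 0 < ℓ (ρ + 3))
    (hp : p <+: rotForm x ℓ (n + 3) ρ c) (hlen : c + ℓ (ρ + 1) + ℓ (ρ + 2) < p.length) :
    rotHead x ℓ ρ c <+: p :=
  prefix_of_prefix_length_le (rotForm_eq_rotHead_append hℓ ▸ prefix_append _ _) hp
    (by simp [rotHead]; omega)

theorem length_le_of_prefix_rotForm_of_prefix_replicate {n ρ c N : ℕ} {p : List α} {y : α}
    (hx : x ρ ≠ x (ρ + 1)) (hℓ : 0 < ℓ (ρ + 1)) (hc : 0 < c)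
    (hp : p <+: rotForm x ℓ (n + 1) ρ c) (hpure : p <+: replicate N y) : p.length ≤ c := by
  by_contra! hlen
  have hq : replicate c (x ρ) ++ [x (ρ + 1)] <+: p := by
    refine prefix_of_prefix_length_le ?_ hp (by simpa)
    obtain ⟨m, hm⟩ := Nat.exists_eq_add_one_of_ne_zero hℓ.ne'
    simp [rotForm, runs, hm, replicate_succ]
  have hmem : ∀ z ∈ replicate c (x ρ) ++ [x (ρ + 1)], z = y :=
    fun z hz => eq_of_mem_replicate (hpure.subset (hq.subset hz))
  exact hx ((hmem _ (by simp [hc.ne'])).trans (hmem _ (by simp)).symm)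

theorem eq_of_rotHead_prefix_rotForm {x' : ℕ → α} {ℓ' : ℕ → ℕ} {n ρ ρ' c c' : ℕ}
    (hx : ∀ t, x t ≠ x (t + 1)) (hx' : ∀ t, x' t ≠ x' (t + 1)) (hℓ : ∀ t, 0 < ℓ t)
    (hℓ' : ∀ t, 0 < ℓ' t) (hc : 0 < c) (hc' : 0 < c')
    (h : rotHead x ℓ ρ c <+: rotForm x' ℓ' (n + 3) ρ' c') :
    c = c' ∧ x ρ = x' ρ' ∧ x (ρ + 1) = x' (ρ' + 1) ∧ ℓ (ρ + 1) = ℓ' (ρ' + 1) ∧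
      ℓ (ρ + 2) = ℓ' (ρ' + 2) := by
  have head_ne (k t : ℕ) (hk : 0 < k) (u : List α) :
      x' t ∉ (replicate k (x' (t + 1)) ++ u).head? := by
    simpa [head?_append, head?_replicate, hk.ne'] using (hx' t).symm
  rw [rotForm_eq_rotHead_append (hℓ' _)] at h
  simp only [rotHead, append_assoc] at h
  obtain ⟨rfl, h₀, h⟩ := replicate_append_prefix_replicate_append hc hc'
    (by simp [head?_replicate, (hℓ _).ne']) (hx ρ) (head_ne _ _ (hℓ' _) _) h
  obtain ⟨h₂, h₁, h⟩ := replicate_append_prefix_replicate_append (hℓ _) (hℓ' _)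
    (by simp [head?_replicate, (hℓ _).ne']) (hx _) (head_ne _ _ (hℓ' _) _) h
  obtain ⟨h₃, -, -⟩ := replicate_append_prefix_replicate_append (hℓ _) (hℓ' _)
    rfl (hx _) (by simpa using (hx' (ρ' + 2)).symm) h
  exact ⟨rfl, h₀, h₁, h₂, h₃⟩

end Runs

section CommutatorWords

theorem inv_prod_range_commutator {G : Type*} [Group G] (x y : ℕ → G) (m : ℕ) :
    ((range m).map fun i => ⁅x i, y i⁆).prod⁻¹ =
      ((range m).map fun i => ⁅y (m - 1 - i), x (m - 1 - i)⁆).prod := by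
  rw [prod_inv_reverse, map_map, ← map_reverse, range_eq_range', reverse_range', map_map]
  simp [comp_def, commutatorElement_inv, ← range_eq_range']

variable {α : Type*}

/-- Run `t` of the word of `∏ i, ⁅of g ^ e i, of h ^ f i⁆` is a power of `g` or `h` (by the parity
of `t`) with sign `+` for `t % 4 < 2`, and exponent `e (t / 4)` or `f (t / 4)`. -/
def commLetter (g h : α) (t : ℕ) : α × Bool := (if t % 2 = 0 then g else h, decide (t % 4 < 2))

def commLength (e f : ℕ → ℕ) (t : ℕ) : ℕ := if t % 2 = 0 then e (t / 4) else f (t / 4)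

theorem periodic_commLetter (g h : α) : Periodic (commLetter g h) 4 := fun t => by
  simp only [commLetter, Nat.add_mod_right, show (t + 4) % 2 = t % 2 by omega]

theorem periodic_commLength {e f : ℕ → ℕ} {m : ℕ} (he : Periodic e m) (hf : Periodic f m) :
    Periodic (commLength e f) (4 * m) := fun t => by
  simp only [commLength, show (t + 4 * m) % 2 = t % 2 by omega,
    show (t + 4 * m) / 4 = t / 4 + m by omega, he _, hf _]

theorem commLetter_fst_ne {g h : α} (hgh : g ≠ h) (t : ℕ) :
    (commLetter g h t).1 ≠ (commLetter g h (t + 1)).1 := by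
  rcases Nat.mod_two_eq_zero_or_one t with ht | ht <;>
    simp [commLetter, ht, Nat.succ_mod_two_eq_zero_iff, hgh, hgh.symm]

theorem commLength_pos {e f : ℕ → ℕ} (he : ∀ i, 0 < e i) (hf : ∀ i, 0 < f i) (t : ℕ) :
    0 < commLength e f t := by
  unfold commLength; split_ifs <;> simp [he, hf]

theorem length_runs_comm (g h : α) (e f : ℕ → ℕ) (m : ℕ) :
    (runs (commLetter g h) (commLength e f) 0 (4 * m)).length =
      2 * ∑ i ∈ Finset.range m, (e i + f i) := by
  induction m with
  | zero => rfl
  | succ m ih =>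
    rw [Nat.mul_succ, runs_add, length_append, ih, Finset.sum_range_succ]
    simp [runs, commLength, show 4 * m % 2 = 0 by omega, show (4 * m + 1) % 2 = 1 by omega,
      show (4 * m + 2) % 2 = 0 by omega, show (4 * m + 3) % 2 = 1 by omega,
      show (4 * m + 1) / 4 = m by omega, show (4 * m + 2) / 4 = m by omega,
      show (4 * m + 3) / 4 = m by omega, add_assoc]
    ring

variable [DecidableEq α] {g h : α} {e f : ℕ → ℕ}

theorem commutatorElement_of_pow_eq_mk (i : ℕ) :
    ⁅of g ^ e i, of h ^ f i⁆ = mk (runs (commLetter g h) (commLength e f) (4 * i) 4) := by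
  have hpow (y : α) (k : ℕ) : of y ^ k = mk (replicate k (y, true)) := by
    rw [← toWord_of_pow, mk_toWord]
  simp [commutatorElement_def, hpow, inv_mk, mul_mk, invRev, runs, commLetter, commLength,
    show 4 * i % 2 = 0 by omega, show (4 * i + 1) % 2 = 1 by omega,
    show (4 * i + 2) % 2 = 0 by omega, show (4 * i + 3) % 2 = 1 by omega,
    show (4 * i + 1) % 4 = 1 by omega, show (4 * i + 2) % 4 = 2 by omega,
    show (4 * i + 3) % 4 = 3 by omega, show (4 * i + 1) / 4 = i by omega,
    show (4 * i + 2) / 4 = i by omega, show (4 * i + 3) / 4 = i by omega, add_assoc]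

theorem prod_commutators_eq_mk (m : ℕ) :
    ((range m).map fun i => ⁅of g ^ e i, of h ^ f i⁆).prod =
      mk (runs (commLetter g h) (commLength e f) 0 (4 * m)) := by
  induction m with
  | zero => rfl
  | succ m ih =>
    rw [range_succ, map_append, prod_append, ih, map_singleton, prod_singleton,
      commutatorElement_of_pow_eq_mk, mul_mk, Nat.mul_succ, runs_add, Nat.zero_add]

theorem toWord_prod_commutators (hgh : g ≠ h) (he : ∀ i, 0 < e i) (hf : ∀ i, 0 < f i)
    (m : ℕ) : ((range m).map fun i => ⁅of g ^ e i, of h ^ f i⁆).prod.toWord =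
      runs (commLetter g h) (commLength e f) 0 (4 * m) := by
  rw [prod_commutators_eq_mk, toWord_mk]
  refine IsReduced.reduce_eq (isChain_runs _ _ (fun _ _ => rfl) (fun t ht => ?_)
    (commLength_pos he hf) _ _)
  exact absurd ht (commLetter_fst_ne hgh t)

end CommutatorWords

/-- Runs of the cyclic word of `w n` (`s = false`) and of `(w n)⁻¹` (`s = true`), where
`M = 2 ^ 2 ^ n`. -/
def wLetter : Bool → ℕ → Fin 2 × Bool
  | false => commLetter 0 1
  | true => commLetter 1 0

def wLength (M : ℕ) : Bool → ℕ → ℕ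
  | false => commLength (fun i => i % 100 + 1) fun _ => M
  | true => commLength (fun _ => M) fun i => 100 - i % 100

theorem wLetter_mod (s : Bool) (t : ℕ) : wLetter s (t % 4) = wLetter s t := by
  cases s <;> exact (periodic_commLetter _ _).map_mod_nat t

theorem wLetter_inj {s s' : Bool} {ρ ρ' : ℕ} (h₀ : wLetter s ρ = wLetter s' ρ')
    (h₁ : wLetter s (ρ + 1) = wLetter s' (ρ' + 1)) : s = s' ∧ ρ % 4 = ρ' % 4 := by
  have key : ∀ (s s' : Bool) (q q' : Fin 4), wLetter s q = wLetter s' q' →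
      wLetter s (q + 1 : ℕ) = wLetter s' (q' + 1 : ℕ) → s = s' ∧ q = q' := by
    decide
  have hsucc (s : Bool) (t : ℕ) : wLetter s (t + 1) = wLetter s (t % 4 + 1) := by
    rw [← wLetter_mod s (t % 4 + 1), ← wLetter_mod s (t + 1)]
    congr 1
    omega
  rw [← wLetter_mod, ← wLetter_mod s'] at h₀
  rw [hsucc, hsucc s'] at h₁
  obtain ⟨rfl, h⟩ := key s s' ⟨ρ % 4, Nat.mod_lt _ (by norm_num)⟩
    ⟨ρ' % 4, Nat.mod_lt _ (by norm_num)⟩ h₀ h₁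
  exact ⟨rfl, Fin.mk.inj h⟩

theorem wLetter_wLength_inj {s s' : Bool} {M M' ρ ρ' : ℕ}
    (h₀ : wLetter s ρ = wLetter s' ρ') (h₁ : wLetter s (ρ + 1) = wLetter s' (ρ' + 1))
    (h₂ : wLength M s (ρ + 1) = wLength M' s' (ρ' + 1))
    (h₃ : wLength M s (ρ + 2) = wLength M' s' (ρ' + 2)) :
    s = s' ∧ M = M' ∧ ρ % 400 = ρ' % 400 := by
  obtain ⟨rfl, hmod⟩ := wLetter_inj h₀ h₁
  refine ⟨rfl, ?_⟩
  cases s <;> simp only [wLength, commLength] at h₂ h₃ <;>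
    split_ifs at h₂ h₃ <;> omega

theorem w_eq_prod (n : ℕ) :
    w n = ((range 100).map fun i =>
      ⁅of (0 : Fin 2) ^ (i % 100 + 1), of (1 : Fin 2) ^ 2 ^ 2 ^ n⁆).prod := by
  unfold w a b
  exact congrArg List.prod (map_congr_left fun i hi => by rw [Nat.mod_eq_of_lt (mem_range.1 hi)])

theorem inv_w_eq_prod (n : ℕ) :
    (w n)⁻¹ = ((range 100).map fun i =>
      ⁅of (1 : Fin 2) ^ 2 ^ 2 ^ n, of (0 : Fin 2) ^ (100 - i % 100)⁆).prod := by
  unfold w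
  refine (inv_prod_range_commutator _ _ _).trans
    (congrArg List.prod (map_congr_left fun i hi => ?_))
  have hi := mem_range.1 hi
  simp only [a, b, Nat.mod_eq_of_lt hi, show 100 - 1 - i + 1 = 100 - i by omega]

theorem toWord_w (n : ℕ) :
    (w n).toWord = runs (wLetter false) (wLength (2 ^ 2 ^ n) false) 0 400 := by
  rw [w_eq_prod, toWord_prod_commutators (by decide) (fun _ => Nat.succ_pos _)
    (fun _ => by positivity)]
  rfl

theorem toWord_inv_w (n : ℕ) :
    (w n)⁻¹.toWord = runs (wLetter true) (wLength (2 ^ 2 ^ n) true) 0 400 := by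
  rw [inv_w_eq_prod, toWord_prod_commutators (by decide) (fun _ => by positivity)
    (fun i => Nat.sub_pos_of_lt (Nat.mod_lt i (by norm_num)))]
  rfl

theorem length_toWord_w (n : ℕ) : (w n).toWord.length = 10100 + 200 * 2 ^ 2 ^ n := by
  rw [w_eq_prod, toWord_prod_commutators (by decide) (fun _ => Nat.succ_pos _)
    (fun _ => by positivity), length_runs_comm, Finset.sum_add_distrib, Finset.sum_const,
    Finset.card_range, smul_eq_mul, show ∑ i ∈ Finset.range 100, (i % 100 + 1) = 5050 by decide]
  ring

theorem periodic_wLetter (s : Bool) : Periodic (wLetter s) 400 := by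
  cases s <;> simpa [wLetter] using (periodic_commLetter _ _).nat_mul 100

theorem periodic_wLength (M : ℕ) (s : Bool) : Periodic (wLength M s) 400 := by
  cases s <;> simp only [wLength] <;>
    exact periodic_commLength (m := 100) (fun _ => by simp) (fun _ => by simp)

theorem wLetter_ne (s : Bool) (t : ℕ) : wLetter s t ≠ wLetter s (t + 1) := by
  cases s <;> exact fun h => commLetter_fst_ne (by decide) t (congrArg Prod.fst h)

theorem wLength_pos {M : ℕ} (hM : 0 < M) (s : Bool) (t : ℕ) : 0 < wLength M s t := by
  cases s <;> simp only [wLength]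
  · exact commLength_pos (fun _ => Nat.succ_pos _) (fun _ => hM) t
  · exact commLength_pos (fun _ => hM) (fun i => Nat.sub_pos_of_lt (Nat.mod_lt i (by norm_num))) t

theorem wLength_le {M : ℕ} (hM : 100 ≤ M) (s : Bool) (t : ℕ) : wLength M s t ≤ M := by
  have := Nat.mod_lt (t / 4) (show 0 < 100 by norm_num)
  cases s <;> simp only [wLength, commLength] <;> split_ifs <;> omega

/-- `L` is the reduced word of a cyclic permutation of `w n` or `(w n)⁻¹`, where `M = 2 ^ 2 ^ n`,
written in the normal form `rotForm`. -/
def IsWRotation (M : ℕ) (L : List (Fin 2 × Bool)) : Prop :=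
  ∃ s ρ c, 0 < c ∧ c ≤ wLength M s ρ ∧ L = rotForm (wLetter s) (wLength M s) 399 ρ c

theorem isWRotation_rotate {M : ℕ} (hM : 0 < M) (s : Bool) (i : ℕ) :
    IsWRotation M ((runs (wLetter s) (wLength M s) 0 400).rotate i) :=
  ⟨s, exists_rotate_runs_eq_rotForm (periodic_wLetter s) (periodic_wLength M s)
    (wLength_pos hM s) i⟩

theorem eq_rotForm_of_rotHead_prefix {M M' ρ c : ℕ} {s : Bool} {L : List (Fin 2 × Bool)}
    (hM : 0 < M) (hM' : 0 < M') (hc : 0 < c) (hL : IsWRotation M' L)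
    (h : rotHead (wLetter s) (wLength M s) ρ c <+: L) :
    L = rotForm (wLetter s) (wLength M s) 399 ρ c := by
  obtain ⟨s', ρ', c', hc', -, rfl⟩ := hL
  obtain ⟨rfl, h₀, h₁, h₂, h₃⟩ := eq_of_rotHead_prefix_rotForm (wLetter_ne s) (wLetter_ne s')
    (wLength_pos hM s) (wLength_pos hM' s') hc hc' h
  obtain ⟨rfl, rfl, hρ⟩ := wLetter_wLength_inj h₀ h₁ h₂ h₃
  exact rotForm_congr (periodic_wLetter s) (periodic_wLength M s) hρ.symm c

theorem hundred_lt_two_pow_two_pow {n : ℕ} (hn : 3 ≤ n) : 100 < 2 ^ 2 ^ n :=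
  calc 100 < 2 ^ 2 ^ 3 := by norm_num
    _ ≤ 2 ^ 2 ^ n := Nat.pow_le_pow_right two_pos (Nat.pow_le_pow_right two_pos hn)

theorem six_mul_two_pow_two_pow_lt {n k : ℕ} (hn : 2 ≤ n) (hnk : n < k) :
    6 * 2 ^ 2 ^ n < 2 ^ 2 ^ k :=
  calc 6 * 2 ^ 2 ^ n < 2 ^ 2 ^ 2 * 2 ^ 2 ^ n := by norm_num
    _ ≤ 2 ^ 2 ^ n * 2 ^ 2 ^ n :=
      Nat.mul_le_mul_right _ (Nat.pow_le_pow_right two_pos (Nat.pow_le_pow_right two_pos hn))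
    _ = 2 ^ 2 ^ (n + 1) := by ring
    _ ≤ 2 ^ 2 ^ k := Nat.pow_le_pow_right two_pos (Nat.pow_le_pow_right two_pos hnk)

theorem toWord_of_mem_symClosure {S : Set ℕ} {k : ℕ} {r : F2}
    (hr : r ∈ symClosure ({b ^ 2 ^ 2 ^ k} ∪ {x | ∃ n ∈ S, n < k ∧ x = w n})) :
    (∃ s, r.toWord = replicate (2 ^ 2 ^ k) (1, s)) ∨
      ∃ n ∈ S, n < k ∧ r.toWord.length = 10100 + 200 * 2 ^ 2 ^ n ∧
        IsWRotation (2 ^ 2 ^ n) r.toWord := by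
  obtain ⟨r₀, rfl | ⟨n, hn, hnk, rfl⟩, i, hi | hi⟩ := hr
  · exact .inl ⟨true, by rw [hi, b, toWord_of_pow, rotate_replicate]⟩
  · exact .inl ⟨false, by simp [hi, b, toWord_inv, toWord_of_pow, invRev, rotate_replicate]⟩
  · refine .inr ⟨n, hn, hnk, by rw [hi, length_rotate, length_toWord_w], ?_⟩
    rw [hi, toWord_w]
    exact isWRotation_rotate (by positivity) false i
  · refine .inr ⟨n, hn, hnk, by rw [hi, length_rotate, toWord_inv, invRev_length,
      length_toWord_w], ?_⟩
    rw [hi, toWord_inv_w]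
    exact isWRotation_rotate (by positivity) true i

theorem length_le_of_isWRotation {M N : ℕ} {L p : List (Fin 2 × Bool)} {y : Fin 2 × Bool}
    (hM : 100 ≤ M) (hL : IsWRotation M L) (hp : p <+: L) (hpure : p <+: replicate N y) :
    p.length ≤ M := by
  obtain ⟨s, ρ, c, hc, hcρ, rfl⟩ := hL
  exact (length_le_of_prefix_rotForm_of_prefix_replicate (wLetter_ne s ρ)
    (wLength_pos (by omega) s _) hc hp hpure).trans (hcρ.trans (wLength_le hM s ρ))

theorem exists_length_le_of_isPiece_of_prefix_replicate {S : Set ℕ} {k N : ℕ}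
    {p : List (Fin 2 × Bool)} {y : Fin 2 × Bool} (hS : S ⊆ {n | 100 < n})
    (hp : IsPiece ({b ^ 2 ^ 2 ^ k} ∪ {x | ∃ n ∈ S, n < k ∧ x = w n}) p)
    (hpure : p <+: replicate N y) : ∃ n ∈ S, n < k ∧ p.length ≤ 2 ^ 2 ^ n := by
  obtain ⟨hp₀, r₁, hr₁, r₂, hr₂, hne, hp₁, hp₂⟩ := hp
  have hM {n : ℕ} (hn : n ∈ S) : 100 ≤ 2 ^ 2 ^ n := (hundred_lt_two_pow_two_pow (by
    have : 100 < n := hS hn; omega)).le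
  rcases toWord_of_mem_symClosure hr₁ with ⟨s₁, h₁⟩ | ⟨n, hn, hnk, -, hrot⟩
  · rcases toWord_of_mem_symClosure hr₂ with ⟨s₂, h₂⟩ | ⟨n, hn, hnk, -, hrot⟩
    · obtain ⟨z, hz⟩ := exists_mem_of_ne_nil p hp₀
      have h₁z := eq_of_mem_replicate ((h₁ ▸ hp₁).subset hz)
      have h₂z := eq_of_mem_replicate ((h₂ ▸ hp₂).subset hz)
      exact absurd (toWord_injective (h₁.trans (h₁z.symm.trans h₂z ▸ h₂.symm))) hne
    · exact ⟨n, hn, hnk, length_le_of_isWRotation (hM hn) hrot hp₂ hpure⟩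
  · exact ⟨n, hn, hnk, length_le_of_isWRotation (hM hn) hrot hp₁ hpure⟩

theorem not_isPiece_of_rotHead_prefix {S : Set ℕ} {k M ρ c : ℕ} {s : Bool}
    {p : List (Fin 2 × Bool)} (hM : 0 < M) (hc : 0 < c)
    (h : rotHead (wLetter s) (wLength M s) ρ c <+: p) :
    ¬ IsPiece ({b ^ 2 ^ 2 ^ k} ∪ {x | ∃ n ∈ S, n < k ∧ x = w n}) p := by
  rintro ⟨-, r₁, hr₁, r₂, hr₂, hne, hp₁, hp₂⟩
  suffices key : ∀ r ∈ symClosure ({b ^ 2 ^ 2 ^ k} ∪ {x | ∃ n ∈ S, n < k ∧ x = w n}),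
      p <+: r.toWord → r.toWord = rotForm (wLetter s) (wLength M s) 399 ρ c from
    hne (toWord_injective ((key r₁ hr₁ hp₁).trans (key r₂ hr₂ hp₂).symm))
  intro r hr hpr
  rcases toWord_of_mem_symClosure hr with ⟨s', hs'⟩ | ⟨n, -, -, -, hrot⟩
  · have hsub := (h.trans (hs' ▸ hpr)).subset
    have h₀ := eq_of_mem_replicate (hsub (show wLetter s ρ ∈ _ by simp [rotHead, hc.ne']))
    have h₁ := eq_of_mem_replicate (hsub (show wLetter s (ρ + 1) ∈ _ by
      simp [rotHead, (wLength_pos hM s _).ne']))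
    exact absurd (h₀.trans h₁.symm) (wLetter_ne s ρ)
  · exact eq_rotForm_of_rotHead_prefix hM (by positivity) hc hrot (h.trans hpr)

theorem cprime_sixth_Gk_general (S : Set ℕ) (hS : S ⊆ {n | 100 < n}) (k : ℕ) :
    CPrimeSixth ({b ^ 2 ^ 2 ^ k} ∪ {x | ∃ n ∈ S, n < k ∧ x = w n}) := by
  intro p hp r hr hpr
  rcases toWord_of_mem_symClosure hr with ⟨s, hrs⟩ | ⟨n, hn, hnk, hlen, s, ρ, c, hc, hcρ, hrρ⟩
  · obtain ⟨m, hm, hmk, hpm⟩ := exists_length_le_of_isPiece_of_prefix_replicate hS hp (hrs ▸ hpr)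
    rw [hrs, length_replicate]
    calc 6 * p.length ≤ 6 * 2 ^ 2 ^ m := by omega
      _ < 2 ^ 2 ^ k := six_mul_two_pow_two_pow_lt (by have : 100 < m := hS hm; omega) hmk
  · have hM : 100 < 2 ^ 2 ^ n := hundred_lt_two_pow_two_pow (by have : 100 < n := hS hn; omega)
    have hℓ (t : ℕ) : wLength (2 ^ 2 ^ n) s t ≤ 2 ^ 2 ^ n := wLength_le hM.le s t
    rw [hlen]
    by_contra! hlong
    refine not_isPiece_of_rotHead_prefix (by omega) hc (rotHead_prefix_of_prefix
      (wLength_pos (by omega) s _) (hrρ ▸ hpr) ?_) hp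
    linarith [hℓ ρ, hℓ (ρ + 1), hℓ (ρ + 2)]

/-- For any infinite `S ⊆ {n : ℕ | n > 100}` and any `k ∈ ℕ`, the presentation
`⟨a, b ∣ b^(2^(2^k)), w_n : n ∈ S, n < k⟩` satisfies `C'(1/6)`. -/
theorem cprime_sixth_Gk (S : Set ℕ) (hS : S ⊆ {n | 100 < n}) (hinf : S.Infinite) (k : ℕ) :
    CPrimeSixth ({b ^ 2 ^ 2 ^ k} ∪ {x | ∃ n ∈ S, n < k ∧ x = w n}) :=
  cprime_sixth_Gk_general S hS k
end

section
/- For all k, m ∈ ℕ with m ≥ k, the element w_m of the free group F₂ = ⟨a, b⟩ lies in the normal closure of {b^(2^(2^k))} in F₂. Consequently, for S ⊆ ℕ, the quotient of G(S) = ⟨a, b ∣ w_n : n ∈ S⟩ by the normal closure of the image of b^(2^(2^k)) is isomorphic to ⟨a, b ∣ b^(2^(2^k)), w_n : n ∈ S, n < k⟩. -/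
/-- `G(S) = ⟨a, b ∣ w_n : n ∈ S⟩`. -/
abbrev G (S : Set ℕ) := F2 ⧸ Subgroup.normalClosure {x | ∃ n ∈ S, x = w n}

/-- `G_k = ⟨a, b ∣ b^(2^(2^k)), w_n : n ∈ S, n < k⟩`. -/
abbrev Gk (S : Set ℕ) (k : ℕ) :=
  F2 ⧸ Subgroup.normalClosure ({b ^ 2 ^ 2 ^ k} ∪ {x | ∃ n ∈ S, n < k ∧ x = w n})

open Subgroup

section General

variable {F : Type*} [Group F]

theorem pow_mem_normalClosure_pow_of_dvd (g : F) {d n : ℕ} (h : d ∣ n) :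
    g ^ n ∈ normalClosure {g ^ d} := by
  obtain ⟨c, rfl⟩ := h
  rw [pow_mul]
  exact pow_mem (subset_normalClosure (Set.mem_singleton _)) c

open scoped commutatorElement in
theorem commutatorElement_mem_of_right_mem {H : Subgroup F} [H.Normal]
    (x : F) {y : F} (hy : y ∈ H) : ⁅x, y⁆ ∈ H :=
  commutator_le_right ⊤ H (commutator_mem_commutator (mem_top x) hy)

def quotientNormalClosureImageEquiv (R T : Set F) :
    (F ⧸ normalClosure R) ⧸ normalClosure ((QuotientGroup.mk : F → F ⧸ normalClosure R) '' T) ≃*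
      F ⧸ normalClosure (R ∪ T) :=
  have hmap : normalClosure ((QuotientGroup.mk : F → F ⧸ normalClosure R) '' T) =
      (normalClosure (R ∪ T)).map (QuotientGroup.mk' (normalClosure R)) := by
    rw [normalClosure_union, Subgroup.map_sup, QuotientGroup.map_mk'_self, bot_sup_eq,
      map_normalClosure _ _ (QuotientGroup.mk'_surjective _)]
    rfl
  (QuotientGroup.quotientMulEquivOfEq hmap).trans
    (QuotientGroup.quotientQuotientEquivQuotient _ _ (normalClosure_mono Set.subset_union_left))

end General

theorem w_mem_of_pow_mem {H : Subgroup F2} [H.Normal] {n : ℕ} (h : b ^ 2 ^ 2 ^ n ∈ H) :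
    w n ∈ H :=
  list_prod_mem <| by
    simp only [List.mem_map]
    rintro _ ⟨i, -, rfl⟩
    exact commutatorElement_mem_of_right_mem _ h

theorem w_mem_normalClosure {k m : ℕ} (hkm : k ≤ m) :
    w m ∈ normalClosure {b ^ 2 ^ 2 ^ k} :=
  w_mem_of_pow_mem <| pow_mem_normalClosure_pow_of_dvd b <|
    Nat.pow_dvd_pow 2 (Nat.pow_le_pow_right two_pos hkm)

theorem normalClosure_relators_union_eq (S : Set ℕ) (k : ℕ) :
    normalClosure ({x | ∃ n ∈ S, x = w n} ∪ {b ^ 2 ^ 2 ^ k}) =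
      normalClosure ({b ^ 2 ^ 2 ^ k} ∪ {x | ∃ n ∈ S, n < k ∧ x = w n}) := by
  apply le_antisymm
  · refine normalClosure_le_normal ?_
    rintro _ (⟨n, hn, rfl⟩ | rfl)
    · by_cases hnk : n < k
      · exact subset_normalClosure (Or.inr ⟨n, hn, hnk, rfl⟩)
      · exact normalClosure_mono Set.subset_union_left (w_mem_normalClosure (not_lt.mp hnk))
    · exact subset_normalClosure (Or.inl rfl)
  · refine normalClosure_mono ?_
    rintro _ (rfl | ⟨n, hn, -, rfl⟩)
    · exact Or.inr rfl
    · exact Or.inl ⟨n, hn, rfl⟩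

/-- For `m ≥ k`, `w_m` lies in the normal closure of `b^(2^(2^k))` in `F₂`; consequently
for any `S ⊆ ℕ` the quotient of `G(S)` by the normal closure of the image of `b^(2^(2^k))`
is isomorphic to `⟨a, b ∣ b^(2^(2^k)), w_n : n ∈ S, n < k⟩`. -/
theorem w_mem_normalClosure_and_quotient_iso :
    (∀ k m : ℕ, k ≤ m → w m ∈ Subgroup.normalClosure {b ^ 2 ^ 2 ^ k}) ∧
    ∀ (S : Set ℕ) (k : ℕ),
      Nonempty ((G S ⧸ Subgroup.normalClosure
          ({QuotientGroup.mk (b ^ 2 ^ 2 ^ k)} : Set (G S))) ≃* Gk S k) := by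
  refine ⟨fun k m hkm => w_mem_normalClosure hkm, fun S k => ?_⟩
  rw [← Set.image_singleton]
  exact ⟨(quotientNormalClosureImageEquiv _ _).trans
    (QuotientGroup.quotientMulEquivOfEq (normalClosure_relators_union_eq S k))⟩
end
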